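/- arXiv:math/0604497 — 4 statements merged into one kernel-verified Lean document; each statement's English description precedes it below -/
import Mathlib

section
/- In ℂ², let K := {(w₁+w₃, w₂+w₃) : w₁,w₂,w₃ ∈ ℂ, |w₁|+|w₂|+|w₃| ≤ 1}, the absolutely convex hull of e₁=(1,0), e₂=(0,1) and e=(1,1). Then K·K ⊆ K (coordinatewise product), and K equals the intersection of all closed unit balls of Banach algebra norms on ℂ² that contain {(1,0), (0,1)}. -/
open Pointwise


/-- `N` is a Banach algebra norm on `ℂ²` (coordinatewise operations, unit `1 = (1,1)`). -/
def IsBanachAlgebraNorm (N : (Fin 2 → ℂ) → ℝ) : Prop :=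
  (∀ v, N v = 0 ↔ v = 0) ∧
  (∀ (c : ℂ) (v), N (c • v) = ‖c‖ * N v) ∧
  (∀ v w, N (v + w) ≤ N v + N w) ∧
  (∀ v w, N (v * w) ≤ N v * N w) ∧
  N 1 = 1

/-- `B` is the closed unit ball of some Banach algebra norm on `ℂ²`. -/
def IsBanachAlgebraBall (B : Set (Fin 2 → ℂ)) : Prop :=
  ∃ N : (Fin 2 → ℂ) → ℝ, IsBanachAlgebraNorm N ∧ B = {v | N v ≤ 1}

/-- The absolutely convex hull of `e₁ = (1,0)`, `e₂ = (0,1)` and `e = (1,1)` in `ℂ²`: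
`K = {(w₁+w₃, w₂+w₃) : |w₁|+|w₂|+|w₃| ≤ 1}`. -/
def K : Set (Fin 2 → ℂ) :=
  {v | ∃ w₁ w₂ w₃ : ℂ, ‖w₁‖ + ‖w₂‖ + ‖w₃‖ ≤ 1 ∧ v 0 = w₁ + w₃ ∧ v 1 = w₂ + w₃}

/-! ### Auxiliary gauge function -/

/-- The set of `ℓ¹`-sizes of representations of `v` as `w₁e₁ + w₂e₂ + w₃e`. -/
def repSet (v : Fin 2 → ℂ) : Set ℝ :=
  {s | ∃ w₁ w₂ w₃ : ℂ, s = ‖w₁‖ + ‖w₂‖ + ‖w₃‖ ∧ v 0 = w₁ + w₃ ∧ v 1 = w₂ + w₃}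

/-- The gauge (Minkowski functional) of `K`. -/
noncomputable def Ng (v : Fin 2 → ℂ) : ℝ := sInf (repSet v)

lemma repSet_nonempty (v : Fin 2 → ℂ) : (repSet v).Nonempty :=
  ⟨‖v 0‖ + ‖v 1‖ + ‖(0:ℂ)‖, v 0, v 1, 0, rfl, (add_zero _).symm, (add_zero _).symm⟩

lemma repSet_lb (v : Fin 2 → ℂ) {s : ℝ} (hs : s ∈ repSet v) :
    ‖v 0‖ ≤ s ∧ ‖v 1‖ ≤ s ∧ 0 ≤ s := by
  obtain ⟨w₁, w₂, w₃, rfl, h0, h1⟩ := hs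
  have h0' : ‖v 0‖ ≤ ‖w₁‖ + ‖w₃‖ := h0 ▸ norm_add_le _ _
  have h1' : ‖v 1‖ ≤ ‖w₂‖ + ‖w₃‖ := h1 ▸ norm_add_le _ _
  have := norm_nonneg w₁; have := norm_nonneg w₂; have := norm_nonneg w₃
  refine ⟨by linarith, by linarith, by linarith⟩

lemma repSet_bddBelow (v : Fin 2 → ℂ) : BddBelow (repSet v) :=
  ⟨0, fun s hs => (repSet_lb v hs).2.2⟩

lemma Ng_le {v : Fin 2 → ℂ} {s : ℝ} (hs : s ∈ repSet v) : Ng v ≤ s :=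
  csInf_le (repSet_bddBelow v) hs

lemma Ng_nonneg (v : Fin 2 → ℂ) : 0 ≤ Ng v :=
  le_csInf (repSet_nonempty v) fun s hs => (repSet_lb v hs).2.2

lemma coord_le_Ng (v : Fin 2 → ℂ) : ‖v 0‖ ≤ Ng v ∧ ‖v 1‖ ≤ Ng v :=
  ⟨le_csInf (repSet_nonempty v) fun s hs => (repSet_lb v hs).1,
   le_csInf (repSet_nonempty v) fun s hs => (repSet_lb v hs).2.1⟩

lemma Ng_zero : Ng (0 : Fin 2 → ℂ) = 0 := by
  refine le_antisymm ?_ (Ng_nonneg 0)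
  have : (0:ℝ) ∈ repSet (0 : Fin 2 → ℂ) := ⟨0, 0, 0, by simp, by simp, by simp⟩
  exact Ng_le this

lemma Ng_def (v : Fin 2 → ℂ) : Ng v = 0 ↔ v = 0 := by
  constructor
  · intro h
    have h0 := (coord_le_Ng v).1
    have h1 := (coord_le_Ng v).2
    rw [h] at h0 h1
    have hv0 : v 0 = 0 := norm_le_zero_iff.mp h0
    have hv1 : v 1 = 0 := norm_le_zero_iff.mp h1
    funext i
    fin_cases i
    · exact hv0
    · exact hv1
  · rintro rfl; exact Ng_zero

lemma Ng_smul_le (c : ℂ) (v : Fin 2 → ℂ) : Ng (c • v) ≤ ‖c‖ * Ng v := by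
  have h1 : sInf (‖c‖ • repSet v) = ‖c‖ * Ng v := by
    rw [Real.sInf_smul_of_nonneg (norm_nonneg c)]; rfl
  rw [← h1]
  refine csInf_le_csInf (repSet_bddBelow _) ((repSet_nonempty v).smul_set) ?_
  rintro x ⟨s, ⟨w₁, w₂, w₃, rfl, h0, h1⟩, rfl⟩
  refine ⟨c * w₁, c * w₂, c * w₃, ?_, ?_, ?_⟩
  · simp only [smul_eq_mul, norm_mul]; ring
  · simp [Pi.smul_apply, smul_eq_mul, h0, mul_add]
  · simp [Pi.smul_apply, smul_eq_mul, h1, mul_add]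

lemma Ng_smul (c : ℂ) (v : Fin 2 → ℂ) : Ng (c • v) = ‖c‖ * Ng v := by
  rcases eq_or_ne c 0 with rfl | hc
  · simp [Ng_zero]
  · refine le_antisymm (Ng_smul_le c v) ?_
    have h := Ng_smul_le c⁻¹ (c • v)
    rw [inv_smul_smul₀ hc] at h
    rw [norm_inv] at h
    have hc' : (0:ℝ) < ‖c‖ := norm_pos_iff.mpr hc
    calc ‖c‖ * Ng v ≤ ‖c‖ * (‖c‖⁻¹ * Ng (c • v)) :=
          mul_le_mul_of_nonneg_left h (norm_nonneg c)
      _ = Ng (c • v) := by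
          rw [← mul_assoc, mul_inv_cancel₀ (ne_of_gt hc'), one_mul]

lemma Ng_add (v w : Fin 2 → ℂ) : Ng (v + w) ≤ Ng v + Ng w := by
  have key : ∀ s ∈ repSet v, ∀ t ∈ repSet w, Ng (v + w) ≤ s + t := by
    rintro s ⟨w₁, w₂, w₃, rfl, h0, h1⟩ t ⟨u₁, u₂, u₃, rfl, g0, g1⟩
    have hm : ‖w₁ + u₁‖ + ‖w₂ + u₂‖ + ‖w₃ + u₃‖ ∈ repSet (v + w) := by
      refine ⟨w₁ + u₁, w₂ + u₂, w₃ + u₃, rfl, ?_, ?_⟩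
      · simp only [Pi.add_apply, h0, g0]; ring
      · simp only [Pi.add_apply, h1, g1]; ring
    have := Ng_le hm
    have a1 := norm_add_le w₁ u₁
    have a2 := norm_add_le w₂ u₂
    have a3 := norm_add_le w₃ u₃
    linarith
  have step1 : ∀ t ∈ repSet w, Ng (v + w) - t ≤ Ng v := fun t ht =>
    le_csInf (repSet_nonempty v) fun s hs => by linarith [key s hs t ht]
  have step2 : Ng (v + w) - Ng v ≤ Ng w :=
    le_csInf (repSet_nonempty w) fun t ht => by linarith [step1 t ht]
  linarith

lemma Ng_mul (v w : Fin 2 → ℂ) : Ng (v * w) ≤ Ng v * Ng w := by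
  have key : ∀ s ∈ repSet v, ∀ t ∈ repSet w, Ng (v * w) ≤ s * t := by
    rintro s ⟨w₁, w₂, w₃, rfl, h0, h1⟩ t ⟨u₁, u₂, u₃, rfl, g0, g1⟩
    have hm : ‖w₁*u₁ + w₁*u₃ + w₃*u₁‖ + ‖w₂*u₂ + w₂*u₃ + w₃*u₂‖ + ‖w₃*u₃‖
        ∈ repSet (v * w) := by
      refine ⟨w₁*u₁ + w₁*u₃ + w₃*u₁, w₂*u₂ + w₂*u₃ + w₃*u₂, w₃*u₃, rfl, ?_, ?_⟩
      · simp only [Pi.mul_apply, h0, g0]; ring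
      · simp only [Pi.mul_apply, h1, g1]; ring
    have hle := Ng_le hm
    have a1 : ‖w₁*u₁ + w₁*u₃ + w₃*u₁‖ ≤ ‖w₁‖*‖u₁‖ + ‖w₁‖*‖u₃‖ + ‖w₃‖*‖u₁‖ := by
      calc ‖w₁*u₁ + w₁*u₃ + w₃*u₁‖ ≤ ‖w₁*u₁‖ + ‖w₁*u₃‖ + ‖w₃*u₁‖ := norm_add₃_le
        _ = ‖w₁‖*‖u₁‖ + ‖w₁‖*‖u₃‖ + ‖w₃‖*‖u₁‖ := by simp [norm_mul]
    have a2 : ‖w₂*u₂ + w₂*u₃ + w₃*u₂‖ ≤ ‖w₂‖*‖u₂‖ + ‖w₂‖*‖u₃‖ + ‖w₃‖*‖u₂‖ := by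
      calc ‖w₂*u₂ + w₂*u₃ + w₃*u₂‖ ≤ ‖w₂*u₂‖ + ‖w₂*u₃‖ + ‖w₃*u₂‖ := norm_add₃_le
        _ = ‖w₂‖*‖u₂‖ + ‖w₂‖*‖u₃‖ + ‖w₃‖*‖u₂‖ := by simp [norm_mul]
    have a3 : ‖w₃*u₃‖ = ‖w₃‖*‖u₃‖ := norm_mul _ _
    have p1 : (0:ℝ) ≤ ‖w₁‖*‖u₂‖ := mul_nonneg (norm_nonneg _) (norm_nonneg _)
    have p2 : (0:ℝ) ≤ ‖w₂‖*‖u₁‖ := mul_nonneg (norm_nonneg _) (norm_nonneg _)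
    nlinarith [hle]
  refine le_of_forall_pos_le_add fun ε hε => ?_
  set a := Ng v with ha
  set b := Ng w with hb
  have hab : 0 ≤ a := Ng_nonneg v
  have hbb : 0 ≤ b := Ng_nonneg w
  set δ : ℝ := min 1 (ε / (a + b + 2)) with hδdef
  have hδpos : 0 < δ := lt_min one_pos (div_pos hε (by linarith))
  have hδ1 : δ ≤ 1 := min_le_left _ _
  have hδ2 : δ ≤ ε / (a + b + 2) := min_le_right _ _
  obtain ⟨s, hs, hs'⟩ := Real.lt_sInf_add_pos (repSet_nonempty v) hδpos
  obtain ⟨t, ht, ht'⟩ := Real.lt_sInf_add_pos (repSet_nonempty w) hδpos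
  have hs2 : s < a + δ := hs'
  have ht2 : t < b + δ := ht'
  have hsnn : 0 ≤ s := (repSet_lb v hs).2.2
  have htnn : 0 ≤ t := (repSet_lb w ht).2.2
  have hmain := key s hs t ht
  have hst : s * t ≤ (a + δ) * (b + δ) := by
    have hs'' : s ≤ a + δ := le_of_lt hs2
    have ht'' : t ≤ b + δ := le_of_lt ht2
    exact mul_le_mul hs'' ht'' htnn (by linarith)
  have hδε : δ * (a + b + 2) ≤ ε := by
    have h2 : (0:ℝ) < a + b + 2 := by linarith
    calc δ * (a + b + 2) ≤ (ε / (a + b + 2)) * (a + b + 2) :=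
            mul_le_mul_of_nonneg_right hδ2 (le_of_lt h2)
      _ = ε := div_mul_cancel₀ ε (ne_of_gt h2)
  nlinarith

lemma Ng_one : Ng (1 : Fin 2 → ℂ) = 1 := by
  refine le_antisymm ?_ ?_
  · have : (‖(0:ℂ)‖ + ‖(0:ℂ)‖ + ‖(1:ℂ)‖ : ℝ) ∈ repSet (1 : Fin 2 → ℂ) :=
      ⟨0, 0, 1, rfl, by simp, by simp⟩
    have := Ng_le this
    simpa using this
  · refine le_csInf (repSet_nonempty _) ?_
    rintro s ⟨w₁, w₂, w₃, rfl, h0, h1⟩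
    have h0' : (1:ℂ) = w₁ + w₃ := by simpa using h0
    have : (1:ℝ) = ‖w₁ + w₃‖ := by rw [← h0']; simp
    have h2 := norm_add_le w₁ w₃
    have := norm_nonneg w₂
    linarith [this, h2]

lemma Ng_ball_subset_K : {v : Fin 2 → ℂ | Ng v ≤ 1} ⊆ K := by
  -- First: K is closed (it is compact: the image of a compact set).
  have hKclosed : IsClosed K := by
    set f : ℂ × ℂ × ℂ → (Fin 2 → ℂ) := fun p => ![p.1 + p.2.2, p.2.1 + p.2.2] with hf
    set C : Set (ℂ × ℂ × ℂ) := {p | ‖p.1‖ + ‖p.2.1‖ + ‖p.2.2‖ ≤ 1} with hC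
    have hfc : Continuous f := by
      refine continuous_pi fun i => ?_
      fin_cases i
      · simpa [f] using (by fun_prop : Continuous fun a : ℂ × ℂ × ℂ => a.1 + a.2.2)
      · simpa [f] using (by fun_prop : Continuous fun a : ℂ × ℂ × ℂ => a.2.1 + a.2.2)
    have hCc : IsClosed C :=
      isClosed_le (by fun_prop) continuous_const
    have hCb : Bornology.IsBounded C := by
      refine (Metric.isBounded_closedBall (x := (0 : ℂ × ℂ × ℂ)) (r := 1)).subset ?_
      intro p hp
      simp only [Metric.mem_closedBall, dist_zero_right, Prod.norm_def, max_le_iff]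
      have h1 := norm_nonneg p.1
      have h2 := norm_nonneg p.2.1
      have h3 := norm_nonneg p.2.2
      exact ⟨by simp only [hC, Set.mem_setOf_eq] at hp; linarith,
             by simp only [hC, Set.mem_setOf_eq] at hp; constructor <;> linarith⟩
    have hCcomp : IsCompact C := Metric.isCompact_of_isClosed_isBounded hCc hCb
    have hKeq : K = f '' C := by
      ext v
      constructor
      · rintro ⟨w₁, w₂, w₃, hw, h0, h1⟩
        refine ⟨(w₁, w₂, w₃), hw, ?_⟩
        funext i; fin_cases i
        · simp [f, h0]
        · simp [f, h1]
      · rintro ⟨⟨w₁, w₂, w₃⟩, hw, rfl⟩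
        exact ⟨w₁, w₂, w₃, hw, by simp [f], by simp [f]⟩
    rw [hKeq]
    exact (hCcomp.image hfc).isClosed
  intro v hv
  simp only [Set.mem_setOf_eq] at hv
  rw [← hKclosed.closure_eq]
  rw [Metric.mem_closure_iff]
  intro ε hε
  set δ : ℝ := ε / (2 * (‖v‖ + 1)) with hδdef
  have hvnn : (0:ℝ) ≤ ‖v‖ := norm_nonneg v
  have hδpos : 0 < δ := div_pos hε (by linarith)
  obtain ⟨s, hs, hs'⟩ := Real.lt_sInf_add_pos (repSet_nonempty v) hδpos
  obtain ⟨w₁, w₂, w₃, rfl, h0, h1⟩ := hs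
  have hδ1 : (0:ℝ) < 1 + δ := by linarith
  set r : ℝ := (1 + δ)⁻¹ with hr
  have hrpos : 0 < r := inv_pos.mpr hδ1
  refine ⟨r • v, ?_, ?_⟩
  · -- r • v ∈ K
    refine ⟨(r:ℂ) * w₁, (r:ℂ) * w₂, (r:ℂ) * w₃, ?_, ?_, ?_⟩
    · have : ‖((r:ℂ))‖ = r := by
        rw [Complex.norm_real, Real.norm_eq_abs, abs_of_pos hrpos]
      simp only [norm_mul, this]
      have hsum : ‖w₁‖ + ‖w₂‖ + ‖w₃‖ < 1 + δ := by
        have hNg : sInf (repSet v) ≤ 1 := hv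
        linarith
      calc r * ‖w₁‖ + r * ‖w₂‖ + r * ‖w₃‖ = r * (‖w₁‖ + ‖w₂‖ + ‖w₃‖) := by ring
        _ ≤ r * (1 + δ) := by
            exact mul_le_mul_of_nonneg_left (le_of_lt hsum) (le_of_lt hrpos)
        _ = 1 := inv_mul_cancel₀ (ne_of_gt hδ1)
    · simp only [Pi.smul_apply, h0, Complex.real_smul]; ring
    · simp only [Pi.smul_apply, h1, Complex.real_smul]; ring
  · -- dist v (r • v) < ε
    have : dist v (r • v) = ‖(1 - r)‖ * ‖v‖ := by
      rw [dist_eq_norm]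
      have : v - r • v = (1 - r) • v := by rw [sub_smul, one_smul]
      rw [this, norm_smul]
    rw [this]
    have hr1 : r ≤ 1 := by
      rw [hr]; rw [inv_le_one_iff₀]; right; linarith
    have h1r : 1 - r = δ * r := by
      have hrδ : r * (1 + δ) = 1 := inv_mul_cancel₀ (ne_of_gt hδ1)
      linear_combination -hrδ
    have : ‖(1 - r : ℝ)‖ = 1 - r := by
      rw [Real.norm_eq_abs, abs_of_nonneg (by linarith)]
    rw [this, h1r]
    have hrle : r ≤ 1 := hr1
    have : δ * r * ‖v‖ ≤ δ * ‖v‖ := by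
      have : δ * r ≤ δ * 1 := mul_le_mul_of_nonneg_left hrle (le_of_lt hδpos)
      nlinarith
    have hδv : δ * ‖v‖ < ε := by
      rw [hδdef]
      rw [div_mul_eq_mul_div, div_lt_iff₀ (by linarith : (0:ℝ) < 2 * (‖v‖ + 1))]
      nlinarith
    linarith

lemma K_subset_ball : K ⊆ {v : Fin 2 → ℂ | Ng v ≤ 1} := by
  rintro v ⟨w₁, w₂, w₃, hw, h0, h1⟩
  have : (‖w₁‖ + ‖w₂‖ + ‖w₃‖ : ℝ) ∈ repSet v := ⟨w₁, w₂, w₃, rfl, h0, h1⟩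
  exact le_trans (Ng_le this) hw

lemma Ng_ball_eq : {v : Fin 2 → ℂ | Ng v ≤ 1} = K :=
  Set.Subset.antisymm Ng_ball_subset_K K_subset_ball

lemma Ng_isBanachAlgebraNorm : IsBanachAlgebraNorm Ng :=
  ⟨Ng_def, Ng_smul, Ng_add, Ng_mul, Ng_one⟩

/-- `K` is closed under coordinatewise products, and `K` equals the intersection of
all closed unit balls of Banach algebra norms on `ℂ²` containing `{(1,0), (0,1)}`. -/
theorem stmt3 :
    (∀ v ∈ K, ∀ w ∈ K, v * w ∈ K) ∧
    K = ⋂₀ {B | IsBanachAlgebraBall B ∧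
          ({![(1 : ℂ), 0], ![(0 : ℂ), 1]} : Set (Fin 2 → ℂ)) ⊆ B} := by
  constructor
  · rintro v ⟨w₁, w₂, w₃, hw, h0, h1⟩ w ⟨u₁, u₂, u₃, hu, g0, g1⟩
    refine ⟨w₁*u₁ + w₁*u₃ + w₃*u₁, w₂*u₂ + w₂*u₃ + w₃*u₂, w₃*u₃, ?_, ?_, ?_⟩
    · have a1 : ‖w₁*u₁ + w₁*u₃ + w₃*u₁‖ ≤ ‖w₁‖*‖u₁‖ + ‖w₁‖*‖u₃‖ + ‖w₃‖*‖u₁‖ := by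
        calc ‖w₁*u₁ + w₁*u₃ + w₃*u₁‖ ≤ ‖w₁*u₁‖ + ‖w₁*u₃‖ + ‖w₃*u₁‖ := norm_add₃_le
          _ = ‖w₁‖*‖u₁‖ + ‖w₁‖*‖u₃‖ + ‖w₃‖*‖u₁‖ := by simp [norm_mul]
      have a2 : ‖w₂*u₂ + w₂*u₃ + w₃*u₂‖ ≤ ‖w₂‖*‖u₂‖ + ‖w₂‖*‖u₃‖ + ‖w₃‖*‖u₂‖ := by
        calc ‖w₂*u₂ + w₂*u₃ + w₃*u₂‖ ≤ ‖w₂*u₂‖ + ‖w₂*u₃‖ + ‖w₃*u₂‖ := norm_add₃_le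
          _ = ‖w₂‖*‖u₂‖ + ‖w₂‖*‖u₃‖ + ‖w₃‖*‖u₂‖ := by simp [norm_mul]
      have a3 : ‖w₃*u₃‖ = ‖w₃‖*‖u₃‖ := norm_mul _ _
      have p1 : (0:ℝ) ≤ ‖w₁‖*‖u₂‖ := mul_nonneg (norm_nonneg _) (norm_nonneg _)
      have p2 : (0:ℝ) ≤ ‖w₂‖*‖u₁‖ := mul_nonneg (norm_nonneg _) (norm_nonneg _)
      have q1 := norm_nonneg w₁; have q2 := norm_nonneg w₂; have q3 := norm_nonneg w₃
      have r1 := norm_nonneg u₁; have r2 := norm_nonneg u₂; have r3 := norm_nonneg u₃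
      nlinarith
    · simp only [Pi.mul_apply, h0, g0]; ring
    · simp only [Pi.mul_apply, h1, g1]; ring
  · apply Set.Subset.antisymm
    · intro v hv
      rw [Set.mem_sInter]
      rintro B ⟨⟨N', ⟨hdef, hsmul, hadd, hmul, hone⟩, rfl⟩, hsub⟩
      obtain ⟨w₁, w₂, w₃, hw, h0, h1⟩ := hv
      have he1 : N' ![(1:ℂ), 0] ≤ 1 := hsub (Set.mem_insert _ _)
      have he2 : N' ![(0:ℂ), 1] ≤ 1 := hsub (Set.mem_insert_of_mem _ rfl)
      have hveq : v = w₁ • ![(1:ℂ), 0] + w₂ • ![(0:ℂ), 1] + w₃ • (1 : Fin 2 → ℂ) := by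
        funext i; fin_cases i
        · simp [h0]
        · simp [h1]
      have key : N' v ≤ ‖w₁‖ * N' ![(1:ℂ), 0] + ‖w₂‖ * N' ![(0:ℂ), 1] + ‖w₃‖ * N' 1 := by
        rw [hveq]
        calc N' (w₁ • ![(1:ℂ), 0] + w₂ • ![(0:ℂ), 1] + w₃ • (1 : Fin 2 → ℂ))
            ≤ N' (w₁ • ![(1:ℂ), 0] + w₂ • ![(0:ℂ), 1]) + N' (w₃ • (1 : Fin 2 → ℂ)) :=
              hadd _ _
          _ ≤ N' (w₁ • ![(1:ℂ), 0]) + N' (w₂ • ![(0:ℂ), 1]) + N' (w₃ • (1 : Fin 2 → ℂ)) := by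
              linarith [hadd (w₁ • ![(1:ℂ), 0]) (w₂ • ![(0:ℂ), 1])]
          _ = ‖w₁‖ * N' ![(1:ℂ), 0] + ‖w₂‖ * N' ![(0:ℂ), 1] + ‖w₃‖ * N' 1 := by
              rw [hsmul, hsmul, hsmul]
      have b1 : ‖w₁‖ * N' ![(1:ℂ), 0] ≤ ‖w₁‖ := by
        calc ‖w₁‖ * N' ![(1:ℂ), 0] ≤ ‖w₁‖ * 1 :=
              mul_le_mul_of_nonneg_left he1 (norm_nonneg _)
          _ = ‖w₁‖ := mul_one _
      have b2 : ‖w₂‖ * N' ![(0:ℂ), 1] ≤ ‖w₂‖ := by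
        calc ‖w₂‖ * N' ![(0:ℂ), 1] ≤ ‖w₂‖ * 1 :=
              mul_le_mul_of_nonneg_left he2 (norm_nonneg _)
          _ = ‖w₂‖ := mul_one _
      have b3 : ‖w₃‖ * N' 1 = ‖w₃‖ := by rw [hone, mul_one]
      simp only [Set.mem_setOf_eq]
      linarith
    · apply Set.sInter_subset_of_mem
      refine ⟨⟨Ng, Ng_isBanachAlgebraNorm, Ng_ball_eq.symm⟩, ?_⟩
      rintro x (rfl | rfl)
      · exact ⟨1, 0, 0, by simp, by simp, by simp⟩
      · exact ⟨0, 1, 0, by simp, by simp, by simp⟩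
end

section
/- Let ‖·‖ be a Banach algebra norm on ℂ² satisfying von Neumann's inequality, with closed unit ball V. Then there exists r with 0 < r ≤ 1 such that V = {(w₁,w₂) ∈ ℂ² : |w₁| ≤ 1, |w₂| ≤ 1, and |w₁ - w₂| ≤ r·|1 - conj(w₁)·w₂|}; that is, V is the Pick body 𝒫(0,r) of the two-point Nevanlinna–Pick problem with nodes 0 and r. -/
/-- `sup {|p(z)| : |z| ≤ 1}` for a one-variable complex polynomial `p`. -/
noncomputable def supDisk (p : Polynomial ℂ) : ℝ :=
  sSup {t : ℝ | ∃ z : ℂ, ‖z‖ ≤ 1 ∧ t = ‖Polynomial.eval z p‖}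

/-- The norm `N` on `ℂ²` satisfies von Neumann's inequality. -/
def SatisfiesVonNeumann (N : (Fin 2 → ℂ) → ℝ) : Prop :=
  ∀ v : Fin 2 → ℂ, N v ≤ 1 → ∀ p : Polynomial ℂ,
    N (fun i => Polynomial.eval (v i) p) ≤ supDisk p

namespace Stmt6Aux

/-- basis vector -/
def E (i : Fin 2) : Fin 2 → ℂ := fun j => if j = i then 1 else 0

variable {N : (Fin 2 → ℂ) → ℝ}

lemma N_zero (hN : IsBanachAlgebraNorm N) : N 0 = 0 := (hN.1 0).2 rfl

lemma N_nonneg (hN : IsBanachAlgebraNorm N) (v : Fin 2 → ℂ) : 0 ≤ N v := by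
  have h := hN.2.2.1 v (-v)
  have hneg : N (-v) = N v := by
    have := hN.2.1 (-1) v
    simpa [neg_smul, one_smul] using this
  have : N (v + -v) = 0 := by simpa using N_zero hN
  linarith [this ▸ h, hneg ▸ h]

lemma N_E_pos (hN : IsBanachAlgebraNorm N) (i : Fin 2) : 0 < N (E i) := by
  rcases lt_or_eq_of_le (N_nonneg hN (E i)) with h | h
  · exact h
  · exfalso
    have : E i = 0 := (hN.1 (E i)).1 h.symm
    have := congrFun this i
    simp [E] at this

lemma mul_E (v : Fin 2 → ℂ) (i : Fin 2) : v * E i = v i • E i := by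
  funext j
  by_cases h : j = i <;> simp [E, h, Pi.mul_apply, Pi.smul_apply]

lemma coord_le (hN : IsBanachAlgebraNorm N) (v : Fin 2 → ℂ) (i : Fin 2) : ‖v i‖ ≤ N v := by
  have h1 : N (v * E i) ≤ N v * N (E i) := hN.2.2.2.1 v (E i)
  rw [mul_E, hN.2.1] at h1
  have h2 := N_E_pos hN i
  calc ‖v i‖ = ‖v i‖ * N (E i) / N (E i) := by field_simp
    _ ≤ N v * N (E i) / N (E i) := by gcongr
    _ = N v := by field_simp

lemma decomp (v : Fin 2 → ℂ) : v = v 0 • E 0 + v 1 • E 1 := by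
  funext j
  fin_cases j <;> simp [E]

lemma N_le (hN : IsBanachAlgebraNorm N) (v : Fin 2 → ℂ) :
    N v ≤ ‖v 0‖ * N (E 0) + ‖v 1‖ * N (E 1) := by
  calc N v = N (v 0 • E 0 + v 1 • E 1) := by rw [← decomp]
    _ ≤ N (v 0 • E 0) + N (v 1 • E 1) := hN.2.2.1 _ _
    _ = ‖v 0‖ * N (E 0) + ‖v 1‖ * N (E 1) := by rw [hN.2.1, hN.2.1]

lemma supDisk_le {p : Polynomial ℂ} {B : ℝ} (hB : 0 ≤ B)
    (h : ∀ z : ℂ, ‖z‖ ≤ 1 → ‖Polynomial.eval z p‖ ≤ B) : supDisk p ≤ B := by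
  apply Real.sSup_le _ hB
  rintro t ⟨z, hz, rfl⟩
  exact h z hz

end Stmt6Aux

open Polynomial in
lemma key_lemma (hN : IsBanachAlgebraNorm N) (hvn : SatisfiesVonNeumann N)
    (a b c : ℂ) (hc : ‖c‖ < 1)
    (H : ∀ z : ℂ, ‖z‖ ≤ 1 → ‖a + b * z‖ ≤ ‖1 - c * z‖)
    (v : Fin 2 → ℂ) (hv : N v ≤ 1) (hvi : ∀ i, ‖v i‖ ≤ 1) :
    N (fun i => (a + b * v i) / (1 - c * v i)) ≤ 1 := by
  set f : ℂ → ℂ := fun z => (a + b * z) / (1 - c * z) with hf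
  have hD : ∀ z : ℂ, ‖z‖ ≤ 1 → 1 - c * z ≠ 0 := by
    intro z hz h0
    have h1 : ‖c * z‖ < 1 := by
      calc ‖c * z‖ = ‖c‖ * ‖z‖ := norm_mul c z
        _ ≤ ‖c‖ * 1 := by gcongr
        _ < 1 := by simpa using hc
    have h2 : c * z = 1 := (sub_eq_zero.mp h0).symm
    rw [h2] at h1
    simp at h1
  -- the approximating polynomials
  set p : ℕ → Polynomial ℂ := fun n => (C a + C b * X) * ∑ k ∈ Finset.range n, (C c * X) ^ k
    with hp
  have heval : ∀ (n : ℕ) (z : ℂ), ‖z‖ ≤ 1 →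
      Polynomial.eval z (p n) = f z - (a + b * z) * (c * z) ^ n / (1 - c * z) := by
    intro n z hz
    have hnz := hD z hz
    have hne1 : c * z ≠ 1 := by
      intro h; apply hnz; rw [h]; ring
    have : Polynomial.eval z (p n) = (a + b * z) * ∑ k ∈ Finset.range n, (c * z) ^ k := by
      simp [hp, eval_finset_sum]
    have hne0' : c * z - 1 ≠ 0 := sub_ne_zero.2 hne1
    rw [this, geom_sum_eq hne1, hf]
    show (a + b * z) * (((c*z)^n - 1)/(c*z - 1)) =
      (a + b * z) / (1 - c * z) - (a + b * z) * (c * z) ^ n / (1 - c * z)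
    rw [div_sub_div_same, ← mul_div_assoc, div_eq_div_iff hne0' hnz]
    ring
  have herr : ∀ (n : ℕ) (z : ℂ), ‖z‖ ≤ 1 →
      ‖(a + b * z) * (c * z) ^ n / (1 - c * z)‖ ≤ ‖c‖ ^ n := by
    intro n z hz
    have hnz := hD z hz
    rw [norm_div, norm_mul, norm_pow]
    have h1 : ‖a + b * z‖ ≤ ‖1 - c * z‖ := H z hz
    have h2 : ‖c * z‖ ^ n ≤ ‖c‖ ^ n := by
      apply pow_le_pow_left₀ (norm_nonneg _)
      calc ‖c * z‖ = ‖c‖ * ‖z‖ := norm_mul c z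
        _ ≤ ‖c‖ * 1 := by gcongr
        _ = ‖c‖ := by ring
    have hpos : 0 < ‖1 - c * z‖ := norm_pos_iff.2 hnz
    rw [div_le_iff₀ hpos]
    calc ‖a + b * z‖ * ‖c * z‖ ^ n ≤ ‖1 - c * z‖ * ‖c‖ ^ n := by
          apply mul_le_mul h1 h2 (by positivity) (norm_nonneg _)
      _ = ‖c‖ ^ n * ‖1 - c * z‖ := by ring
  have hfle : ∀ z : ℂ, ‖z‖ ≤ 1 → ‖f z‖ ≤ 1 := by
    intro z hz
    rw [hf]
    have hpos : 0 < ‖1 - c * z‖ := norm_pos_iff.2 (hD z hz)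
    rw [norm_div, div_le_one hpos]
    exact H z hz
  have hsup : ∀ n : ℕ, supDisk (p n) ≤ 1 + ‖c‖ ^ n := by
    intro n
    apply Stmt6Aux.supDisk_le (by positivity)
    intro z hz
    rw [heval n z hz]
    calc ‖f z - (a + b * z) * (c * z) ^ n / (1 - c * z)‖
        ≤ ‖f z‖ + ‖(a + b * z) * (c * z) ^ n / (1 - c * z)‖ := norm_sub_le _ _
      _ ≤ 1 + ‖c‖ ^ n := add_le_add (hfle z hz) (herr n z hz)
  set K := N (Stmt6Aux.E 0) + N (Stmt6Aux.E 1) with hK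
  have hbound : ∀ n : ℕ, N (fun i => f (v i)) ≤ 1 + (1 + K) * ‖c‖ ^ n := by
    intro n
    have h1 : N (fun i => Polynomial.eval (v i) (p n)) ≤ 1 + ‖c‖ ^ n :=
      (hvn v hv (p n)).trans (hsup n)
    have hdiff : N (fun i => f (v i) - Polynomial.eval (v i) (p n)) ≤ K * ‖c‖ ^ n := by
      have heq : (fun i => f (v i) - Polynomial.eval (v i) (p n)) =
          fun i => (a + b * v i) * (c * v i) ^ n / (1 - c * v i) := by
        funext i
        rw [heval n (v i) (hvi i)]
        ring
      rw [heq]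
      calc N (fun i => (a + b * v i) * (c * v i) ^ n / (1 - c * v i))
          ≤ ‖(a + b * v 0) * (c * v 0) ^ n / (1 - c * v 0)‖ * N (Stmt6Aux.E 0) +
            ‖(a + b * v 1) * (c * v 1) ^ n / (1 - c * v 1)‖ * N (Stmt6Aux.E 1) :=
            Stmt6Aux.N_le hN _
        _ ≤ ‖c‖ ^ n * N (Stmt6Aux.E 0) + ‖c‖ ^ n * N (Stmt6Aux.E 1) := by
            gcongr
            · exact (Stmt6Aux.N_E_pos hN 0).le
            · exact herr n (v 0) (hvi 0)
            · exact (Stmt6Aux.N_E_pos hN 1).le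
            · exact herr n (v 1) (hvi 1)
        _ = K * ‖c‖ ^ n := by rw [hK]; ring
    have htri : N (fun i => f (v i)) ≤
        N (fun i => Polynomial.eval (v i) (p n)) +
        N (fun i => f (v i) - Polynomial.eval (v i) (p n)) := by
      have := hN.2.2.1 (fun i => Polynomial.eval (v i) (p n))
        (fun i => f (v i) - Polynomial.eval (v i) (p n))
      have heq2 : (fun i => Polynomial.eval (v i) (p n)) +
          (fun i => f (v i) - Polynomial.eval (v i) (p n)) = fun i => f (v i) := by
        funext i; simp
      rwa [heq2] at this
    calc N (fun i => f (v i)) ≤ (1 + ‖c‖ ^ n) + K * ‖c‖ ^ n := by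
          linarith [htri, h1, hdiff]
      _ = 1 + (1 + K) * ‖c‖ ^ n := by ring
  have hlim : Filter.Tendsto (fun n : ℕ => 1 + (1 + K) * ‖c‖ ^ n) Filter.atTop (nhds 1) := by
    have h0 : Filter.Tendsto (fun n : ℕ => ‖c‖ ^ n) Filter.atTop (nhds 0) :=
      tendsto_pow_atTop_nhds_zero_of_lt_one (norm_nonneg c) hc
    have := (h0.const_mul (1 + K)).const_add 1
    simpa using this
  exact ge_of_tendsto' hlim hbound

open Stmt6Aux Complex

lemma one_sub_ne {x : ℂ} (h : ‖x‖ < 1) : (1:ℂ) - x ≠ 0 := by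
  intro h0
  rw [← sub_eq_zero.mp h0] at h
  simp at h

lemma norm_ofReal' {r : ℝ} (h : 0 ≤ r) : ‖(r:ℂ)‖ = r := by
  rw [Complex.norm_real]; exact abs_of_nonneg h

lemma normSq_le_one_of_norm {z : ℂ} (h : ‖z‖ ≤ 1) : Complex.normSq z ≤ 1 := by
  have := Complex.sq_norm z
  nlinarith [norm_nonneg z, h]

lemma core (s u : ℂ) (hs : ‖s‖ ≤ 1) (hu : ‖u‖ ≤ 1) :
    ‖s + u‖ ≤ ‖1 + (starRingEnd ℂ) s * u‖ := by
  have h1 : Complex.normSq (s + u) ≤ Complex.normSq (1 + (starRingEnd ℂ) s * u) := by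
    have h2 := normSq_le_one_of_norm hs
    have h3 := normSq_le_one_of_norm hu
    simp only [Complex.normSq_apply, Complex.add_re, Complex.add_im, Complex.mul_re,
      Complex.mul_im, Complex.one_re, Complex.one_im, Complex.conj_re, Complex.conj_im] at *
    nlinarith [sq_nonneg (s.re*u.im + s.im*u.re), sq_nonneg (s.re*u.re - s.im*u.im)]
  have e1 : ‖s + u‖ ^ 2 = Complex.normSq (s + u) := by
    rw [Complex.sq_norm]
  have e2 : ‖1 + (starRingEnd ℂ) s * u‖ ^ 2 = Complex.normSq (1 + (starRingEnd ℂ) s * u) := by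
    rw [Complex.sq_norm]
  have := e1 ▸ e2 ▸ h1
  exact le_of_pow_le_pow_left₀ two_ne_zero (norm_nonneg _) this

lemma core_sub (s u : ℂ) (hs : ‖s‖ ≤ 1) (hu : ‖u‖ ≤ 1) :
    ‖u - s‖ ≤ ‖1 - (starRingEnd ℂ) s * u‖ := by
  have := core s (-u) hs (by simpa using hu)
  calc ‖u - s‖ = ‖s + -u‖ := by rw [← norm_neg]; ring_nf
    _ ≤ ‖1 + (starRingEnd ℂ) s * -u‖ := this
    _ = ‖1 - (starRingEnd ℂ) s * u‖ := by ring_nf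

lemma t_ineq (t : ℝ) (ht0 : 0 ≤ t) (ht1 : t ≤ 1) (α : ℂ) (hα : ‖α‖ ≤ 1) :
    t * ‖1 - α‖ ≤ ‖1 - (t:ℂ)^2 * α‖ := by
  have h2 := normSq_le_one_of_norm hα
  have h1 : (t * ‖1 - α‖)^2 ≤ ‖1 - (t:ℂ)^2 * α‖^2 := by
    have e1 : ‖1 - α‖^2 = Complex.normSq (1-α) := by rw [Complex.sq_norm]
    have e2 : ‖1 - (t:ℂ)^2*α‖^2 = Complex.normSq (1-(t:ℂ)^2*α) := by
      rw [Complex.sq_norm]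
    rw [mul_pow, e1, e2]
    simp only [← Complex.ofReal_pow]
    simp only [Complex.normSq_apply, Complex.sub_re, Complex.sub_im, Complex.mul_re,
      Complex.mul_im, Complex.one_re, Complex.one_im, Complex.ofReal_re,
      Complex.ofReal_im] at *
    nlinarith [mul_nonneg (by nlinarith : (0:ℝ) ≤ 1 - t^2)
      (by nlinarith [sq_nonneg t] : (0:ℝ) ≤ 1 - t^2*(α.re*α.re+α.im*α.im))]
  exact le_of_pow_le_pow_left₀ two_ne_zero (norm_nonneg _) h1


set_option maxHeartbeats 2000000 in
/-- The closed unit ball of any Banach algebra norm on `ℂ²` that satisfies von Neumann's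
inequality is a Pick body `𝒫(0,r)` for some `0 < r ≤ 1`:
`V = {(w₁,w₂) : |w₁| ≤ 1, |w₂| ≤ 1, |w₁-w₂| ≤ r|1 - conj(w₁)w₂|}`. -/
theorem stmt6 (N : (Fin 2 → ℂ) → ℝ) (hN : IsBanachAlgebraNorm N)
    (hvn : SatisfiesVonNeumann N) (V : Set (Fin 2 → ℂ)) (hV : V = {v | N v ≤ 1}) :
    ∃ r : ℝ, 0 < r ∧ r ≤ 1 ∧
      V = {v : Fin 2 → ℂ | ‖v 0‖ ≤ 1 ∧ ‖v 1‖ ≤ 1 ∧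
        ‖v 0 - v 1‖ ≤ r * ‖1 - (starRingEnd ℂ) (v 0) * v 1‖} := by
  classical
  set S : Set ℝ := {s | 0 ≤ s ∧ s ≤ 1 ∧ N ![(0:ℂ), (s:ℂ)] ≤ 1} with hSdef
  have hvecN : ∀ s : ℝ, 0 ≤ s → N ![(0:ℂ), (s:ℂ)] = s * N (E 1) := by
    intro s hs
    have hveq : ![(0:ℂ), (s:ℂ)] = (s:ℂ) • E 1 := by
      funext j; fin_cases j <;> simp [E]
    rw [hveq, hN.2.1, norm_ofReal' hs]
  have hS0 : (0:ℝ) ∈ S := by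
    refine ⟨le_refl 0, by norm_num, ?_⟩
    rw [hvecN 0 le_rfl]; simp
  have hSne : S.Nonempty := ⟨0, hS0⟩
  have hSbdd : BddAbove S := ⟨1, fun s hs => hs.2.1⟩
  set r := sSup S with hrdef
  have hSr : ∀ s ∈ S, s ≤ r := fun s hs => le_csSup hSbdd hs
  have hr1 : r ≤ 1 := csSup_le hSne (fun s hs => hs.2.1)
  have hE1pos : 0 < N (E 1) := N_E_pos hN 1
  have hr0 : 0 < r := by
    set s0 : ℝ := min 1 (1 / N (E 1)) with hs0def
    have hs0pos : 0 < s0 := lt_min one_pos (by positivity)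
    have hs0S : s0 ∈ S := by
      refine ⟨hs0pos.le, min_le_left _ _, ?_⟩
      rw [hvecN s0 hs0pos.le]
      calc s0 * N (E 1) ≤ (1 / N (E 1)) * N (E 1) := by
            apply mul_le_mul_of_nonneg_right (min_le_right _ _) hE1pos.le
        _ = 1 := by field_simp
    exact lt_of_lt_of_le hs0pos (hSr s0 hs0S)
  have hrS : N ![(0:ℂ), (r:ℂ)] ≤ 1 := by
    apply le_of_forall_pos_le_add
    intro ε hε
    set ε' : ℝ := ε / (N (E 1) + 1) with hε'def
    have hε' : 0 < ε' := by positivity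
    obtain ⟨s, hsS, hs⟩ := exists_lt_of_lt_csSup hSne (show r - ε' < r by linarith)
    have hsr : s ≤ r := hSr s hsS
    have hsplit : ![(0:ℂ), (r:ℂ)] = ![(0:ℂ), (s:ℂ)] + ((r - s : ℝ):ℂ) • E 1 := by
      funext j; fin_cases j <;> simp [E]
    calc N ![(0:ℂ), (r:ℂ)] ≤ N ![(0:ℂ), (s:ℂ)] + N (((r - s : ℝ):ℂ) • E 1) := by
          rw [hsplit]; exact hN.2.2.1 _ _
      _ ≤ 1 + (r - s) * N (E 1) := by
          rw [hN.2.1, norm_ofReal' (by linarith)]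
          exact add_le_add hsS.2.2 le_rfl
      _ ≤ 1 + ε := by
          have h1 : r - s ≤ ε' := by linarith
          have h2 : (r - s) * N (E 1) ≤ ε' * N (E 1) :=
            mul_le_mul_of_nonneg_right h1 hE1pos.le
          have h3 : ε' * N (E 1) ≤ ε := by
            rw [hε'def]
            rw [div_mul_eq_mul_div, div_le_iff₀ (by positivity)]
            nlinarith
          linarith
  clear_value r
  refine ⟨r, hr0, hr1, ?_⟩
  rw [hV]
  ext v
  simp only [Set.mem_setOf_eq]
  constructor
  · -- forward direction
    intro hv
    have h0 : ‖v 0‖ ≤ 1 := (coord_le hN v 0).trans hv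
    have h1 : ‖v 1‖ ≤ 1 := (coord_le hN v 1).trans hv
    refine ⟨h0, h1, ?_⟩
    have claimA : ∀ t : ℝ, 0 < t → t < 1 →
        t * ‖v 0 - v 1‖ ≤ r * ‖1 - (t:ℂ)^2 * ((starRingEnd ℂ) (v 0) * v 1)‖ := by
      intro t ht0 ht1
      set s : ℂ := (t:ℂ) * v 0 with hsdef
      set u : ℂ := (t:ℂ) * v 1 with hudef
      have hts : ‖s‖ ≤ t := by
        rw [hsdef, norm_mul, norm_ofReal' ht0.le]
        nlinarith [norm_nonneg (v 0)]
      have htu : ‖u‖ ≤ t := by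
        rw [hudef, norm_mul, norm_ofReal' ht0.le]
        nlinarith [norm_nonneg (v 1)]
      have hs1 : ‖s‖ ≤ 1 := hts.trans ht1.le
      have hu1 : ‖u‖ ≤ 1 := htu.trans ht1.le
      have hdenn : ‖(starRingEnd ℂ) s * u‖ < 1 := by
        rw [norm_mul, RCLike.norm_conj]
        nlinarith [norm_nonneg s, norm_nonneg u]
      have hden : (1:ℂ) - (starRingEnd ℂ) s * u ≠ 0 := one_sub_ne hdenn
      have hdenpos : 0 < ‖(1:ℂ) - (starRingEnd ℂ) s * u‖ := norm_pos_iff.2 hden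
      set φ : ℂ := (u - s) / (1 - (starRingEnd ℂ) s * u) with hφdef
      set d : ℝ := ‖φ‖ with hddef
      have hd1 : d ≤ 1 := by
        rw [hddef, hφdef, norm_div, div_le_one hdenpos]
        exact core_sub s u hs1 hu1
      set lam : ℂ := if φ = 0 then 1 else (d:ℂ)/φ with hlamdef
      have hlam : ‖lam‖ = 1 := by
        rw [hlamdef]
        split_ifs with h
        · simp
        · rw [norm_div, norm_ofReal' (norm_nonneg φ)]
          exact div_self (norm_ne_zero_iff.2 h)
      have hlamphi : lam * φ = (d:ℂ) := by
        rw [hlamdef]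
        split_ifs with h
        · rw [h]; simp [hddef, h]
        · field_simp
      have hkey := key_lemma hN hvn (-(lam*s)) lam ((starRingEnd ℂ) s)
        (by rw [RCLike.norm_conj]; exact lt_of_le_of_lt hts ht1)
        (by
          intro z hz
          have he : -(lam*s) + lam*z = lam * (z - s) := by ring
          rw [he, norm_mul, hlam, one_mul]
          exact core_sub s z hs1 hz)
        (fun i => (t:ℂ) * v i)
        (by
          have : (fun i => (t:ℂ) * v i) = (t:ℂ) • v := by
            funext i; simp
          rw [this, hN.2.1, norm_ofReal' ht0.le]
          nlinarith [N_nonneg hN v]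
        )
        (by
          intro i
          rw [norm_mul, norm_ofReal' ht0.le]
          have := coord_le hN v i
          nlinarith [norm_nonneg (v i)])
      have hkey' : N (fun i => (-(lam*s) + lam*((t:ℂ)*v i)) /
          (1 - (starRingEnd ℂ) s * ((t:ℂ)*v i))) ≤ 1 := hkey
      have hfun : (fun i => (-(lam*s) + lam*((t:ℂ)*v i)) /
          (1 - (starRingEnd ℂ) s * ((t:ℂ)*v i))) = ![(0:ℂ), (d:ℂ)] := by
        funext i
        fin_cases i
        · show (-(lam*s) + lam*((t:ℂ)*v 0)) / (1 - (starRingEnd ℂ) s * ((t:ℂ)*v 0)) = _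
          rw [← hsdef]
          simp [Matrix.cons_val_zero]
        · show (-(lam*s) + lam*((t:ℂ)*v 1)) / (1 - (starRingEnd ℂ) s * ((t:ℂ)*v 1)) = _
          rw [← hudef]
          have he : -(lam*s) + lam*u = lam * (u - s) := by ring
          rw [he, mul_div_assoc, ← hφdef, hlamphi]
          simp
      rw [hfun] at hkey'
      have hdS : d ∈ S := ⟨norm_nonneg φ, hd1, hkey'⟩
      have hdr : d ≤ r := hSr d hdS
      have hmain : ‖u - s‖ ≤ r * ‖1 - (starRingEnd ℂ) s * u‖ := by
        have : ‖u - s‖ / ‖1 - (starRingEnd ℂ) s * u‖ ≤ r := by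
          rw [← norm_div, ← hφdef, ← hddef]; exact hdr
        calc ‖u - s‖ = (‖u - s‖ / ‖1 - (starRingEnd ℂ) s * u‖) * ‖1 - (starRingEnd ℂ) s * u‖ :=
              (div_mul_cancel₀ _ hdenpos.ne').symm
          _ ≤ r * ‖1 - (starRingEnd ℂ) s * u‖ :=
              mul_le_mul_of_nonneg_right this hdenpos.le
      have he1 : ‖u - s‖ = t * ‖v 0 - v 1‖ := by
        rw [hudef, hsdef]
        have : (t:ℂ) * v 1 - (t:ℂ) * v 0 = (t:ℂ) * (v 1 - v 0) := by ring
        rw [this, norm_mul, norm_ofReal' ht0.le, norm_sub_rev]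
      have he2 : (starRingEnd ℂ) s * u = (t:ℂ)^2 * ((starRingEnd ℂ) (v 0) * v 1) := by
        rw [hsdef, hudef, map_mul, Complex.conj_ofReal]
        ring
      rw [he1, he2] at hmain
      exact hmain
    apply le_of_forall_pos_le_add
    intro ε hε
    set A : ℂ := (starRingEnd ℂ) (v 0) * v 1 with hAdef
    clear_value A
    have hA1 : ‖A‖ ≤ 1 := by
      rw [hAdef, norm_mul, RCLike.norm_conj]
      nlinarith [norm_nonneg (v 0), norm_nonneg (v 1)]
    have hvv2 : ‖v 0 - v 1‖ ≤ 2 := by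
      calc ‖v 0 - v 1‖ ≤ ‖v 0‖ + ‖v 1‖ := norm_sub_le _ _
        _ ≤ 2 := by linarith
    set δ : ℝ := min (ε/4) (1/2) with hδdef
    clear_value δ
    have hδ0 : 0 < δ := by rw [hδdef]; exact lt_min (by linarith) (by norm_num)
    have hδε : δ ≤ ε/4 := by rw [hδdef]; exact min_le_left _ _
    have hδh : δ ≤ 1/2 := by rw [hδdef]; exact min_le_right _ _
    set t : ℝ := 1 - δ with htdef
    clear_value t
    have ht0 : 0 < t := by rw [htdef]; linarith
    have ht1 : t < 1 := by rw [htdef]; linarith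
    have hcA := claimA t ht0 ht1
    have hsplit : ‖(1:ℂ) - (t:ℂ)^2 * A‖ ≤ ‖(1:ℂ) - A‖ + (1 - t^2) * ‖A‖ := by
      have he : (1:ℂ) - (t:ℂ)^2 * A = (1 - A) + ((1 - t^2 : ℝ):ℂ) * A := by
        push_cast; ring
      rw [he]
      calc ‖(1 - A) + ((1 - t^2 : ℝ):ℂ) * A‖ ≤ ‖(1:ℂ) - A‖ + ‖((1 - t^2 : ℝ):ℂ) * A‖ :=
            norm_add_le _ _
        _ = ‖(1:ℂ) - A‖ + (1 - t^2) * ‖A‖ := by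
            rw [norm_mul, norm_ofReal' (by nlinarith : (0:ℝ) ≤ 1 - t^2)]
    have hAnn : 0 ≤ ‖A‖ := norm_nonneg A
    have h1A : 0 ≤ ‖(1:ℂ) - A‖ := norm_nonneg _
    have h1t2 : (0:ℝ) ≤ 1 - t^2 := by rw [htdef]; nlinarith
    have e1 : r * ‖(1:ℂ) - (t:ℂ)^2 * A‖ ≤ r * ‖(1:ℂ) - A‖ + r * ((1 - t^2) * ‖A‖) := by
      nlinarith [mul_le_mul_of_nonneg_left hsplit hr0.le]
    have e2 : r * ((1 - t^2) * ‖A‖) ≤ 1 - t^2 := by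
      have hrA : r * ‖A‖ ≤ 1 := by nlinarith [mul_le_mul hr1 hA1 hAnn zero_le_one]
      nlinarith [mul_le_mul_of_nonneg_left hrA h1t2]
    have e3 : 1 - t^2 ≤ 2*δ := by rw [htdef]; nlinarith
    have e4 : (1 - t) * ‖v 0 - v 1‖ ≤ δ * 2 := by
      have : 1 - t = δ := by rw [htdef]; ring
      rw [this]
      nlinarith [norm_nonneg (v 0 - v 1)]
    nlinarith [hcA, norm_nonneg (v 0 - v 1)]
  · -- backward direction
    rintro ⟨h0, h1, h2⟩
    suffices hT : ∀ t : ℝ, 0 < t → t < 1 → t * N v ≤ 1 by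
      by_contra hc
      push_neg at hc
      have hNv : (0:ℝ) < N v := lt_trans one_pos hc
      set t : ℝ := (1/N v + 1)/2 with htdef
      have h1t : 1/N v < 1 := by rw [div_lt_one hNv]; exact hc
      have ht0 : 0 < t := by rw [htdef]; positivity
      have ht1 : t < 1 := by rw [htdef]; linarith
      have hle := hT t ht0 ht1
      have heq : t * N v = (1 + N v)/2 := by
        rw [htdef]; field_simp
      rw [heq] at hle
      linarith
    intro t ht0 ht1
    set A : ℂ := (starRingEnd ℂ) (v 0) * v 1 with hAdef
    clear_value A
    have hA1 : ‖A‖ ≤ 1 := by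
      rw [hAdef, norm_mul, RCLike.norm_conj]
      nlinarith [norm_nonneg (v 0), norm_nonneg (v 1)]
    set β : ℂ := 1 - (t:ℂ)^2 * A with hβdef
    have hβn : ‖(t:ℂ)^2 * A‖ < 1 := by
      rw [norm_mul, norm_pow, norm_ofReal' ht0.le]
      nlinarith [norm_nonneg A]
    have hβ : β ≠ 0 := one_sub_ne hβn
    have hβpos : 0 < ‖β‖ := norm_pos_iff.2 hβ
    have hkey_ineq : t * ‖v 0 - v 1‖ ≤ r * ‖β‖ := by
      calc t * ‖v 0 - v 1‖ ≤ t * (r * ‖1 - A‖) := by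
            exact mul_le_mul_of_nonneg_left h2 ht0.le
        _ = r * (t * ‖1 - A‖) := by ring
        _ ≤ r * ‖β‖ := by
            apply mul_le_mul_of_nonneg_left _ hr0.le
            rw [hβdef]
            exact t_ineq t ht0.le ht1.le A hA1
    have hrne : (r:ℂ) ≠ 0 := by exact_mod_cast hr0.ne'
    set c' : ℂ := ((t:ℂ) * (v 1 - v 0)) / ((r:ℂ) * β) with hc'def
    have hc'1 : ‖c'‖ ≤ 1 := by
      rw [hc'def, norm_div, norm_mul, norm_mul, norm_ofReal' hr0.le, norm_ofReal' ht0.le]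
      rw [div_le_one (by positivity)]
      rw [norm_sub_rev]
      exact hkey_ineq
    set s : ℂ := (t:ℂ) * v 0 with hsdef
    have hts : ‖s‖ ≤ t := by
      rw [hsdef, norm_mul, norm_ofReal' ht0.le]
      nlinarith [norm_nonneg (v 0)]
    have hs1 : ‖s‖ ≤ 1 := hts.trans ht1.le
    have hr1c : ‖(r:ℂ)‖ ≤ 1 := by rw [norm_ofReal' hr0.le]; exact hr1
    have hkey := key_lemma hN hvn s c' (-((starRingEnd ℂ) s * c'))
      (by
        rw [norm_neg, norm_mul, RCLike.norm_conj]
        calc ‖s‖ * ‖c'‖ ≤ t * 1 := by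
              apply mul_le_mul hts hc'1 (norm_nonneg _) ht0.le
          _ < 1 := by simpa using ht1)
      (by
        intro z hz
        have he : (1:ℂ) - (-((starRingEnd ℂ) s * c')) * z = 1 + (starRingEnd ℂ) s * (c' * z) := by
          ring
        rw [he]
        have hu : ‖c' * z‖ ≤ 1 := by
          rw [norm_mul]
          calc ‖c'‖ * ‖z‖ ≤ 1 * 1 := mul_le_mul hc'1 hz (norm_nonneg z) zero_le_one
            _ = 1 := one_mul 1
        exact core s (c' * z) hs1 hu)
      ![(0:ℂ), (r:ℂ)] hrS
      (by
        intro i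
        fin_cases i
        · simp
        · simpa using hr1c)
    have hkey' : N (fun i => (s + c' * (![(0:ℂ), (r:ℂ)] i)) /
        (1 - (-((starRingEnd ℂ) s * c')) * (![(0:ℂ), (r:ℂ)] i))) ≤ 1 := hkey
    have hden1 : (1:ℂ) - (-((starRingEnd ℂ) s * c')) * (r:ℂ) ≠ 0 := by
      have : ‖(-((starRingEnd ℂ) s * c')) * (r:ℂ)‖ < 1 := by
        rw [norm_mul, norm_neg, norm_mul, RCLike.norm_conj, norm_ofReal' hr0.le]
        calc ‖s‖ * ‖c'‖ * r ≤ t * 1 * 1 := by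
              exact mul_le_mul (mul_le_mul hts hc'1 (norm_nonneg _) ht0.le) hr1 hr0.le
                (by positivity)
          _ < 1 := by simpa using ht1
      exact one_sub_ne this
    have hone_t2 : (1:ℂ) - (t:ℂ)^2 * ((starRingEnd ℂ) (v 0) * v 0) ≠ 0 := by
      apply one_sub_ne
      rw [norm_mul, norm_pow, norm_ofReal' ht0.le, norm_mul, RCLike.norm_conj]
      calc t^2 * (‖v 0‖ * ‖v 0‖) ≤ t^2 * 1 := by
            apply mul_le_mul_of_nonneg_left _ (sq_nonneg t)
            nlinarith [norm_nonneg (v 0)]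
        _ < 1 := by nlinarith
    have hfun : (fun i => (s + c' * (![(0:ℂ), (r:ℂ)] i)) /
        (1 - (-((starRingEnd ℂ) s * c')) * (![(0:ℂ), (r:ℂ)] i))) = fun i => (t:ℂ) * v i := by
      funext i
      fin_cases i
      · show (s + c' * 0) / (1 - (-((starRingEnd ℂ) s * c')) * 0) = (t:ℂ) * v 0
        rw [hsdef]
        simp
      · show (s + c' * (r:ℂ)) / (1 - (-((starRingEnd ℂ) s * c')) * (r:ℂ)) = (t:ℂ) * v 1
        rw [div_eq_iff hden1]
        rw [hc'def, hsdef, map_mul, Complex.conj_ofReal]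
        field_simp [hrne, hβ]
        rw [hβdef, hAdef]
        ring
    rw [hfun] at hkey'
    have hsmul : (fun i => (t:ℂ) * v i) = (t:ℂ) • v := by
      funext i; simp
    rw [hsmul, hN.2.1, norm_ofReal' ht0.le] at hkey'
    exact hkey'
end

section
/- In ℂ², let K := {(w₁+w₃, w₂+w₃) : w₁,w₂,w₃ ∈ ℂ, |w₁|+|w₂|+|w₃| ≤ 1}. Then K is the closed unit ball of a Banach algebra norm on ℂ², but this norm fails von Neumann's inequality: there exist v ∈ K and a complex polynomial p in one variable with sup{|p(z)| : |z| ≤ 1} ≤ 1 such that (p(v₁), p(v₂)) ∉ K. In particular, there is a Banach algebra norm on ℂ² that does not satisfy von Neumann's inequality. -/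
open Complex Polynomial

/-- The norm whose unit ball is `K`. -/
noncomputable def NN (v : Fin 2 → ℂ) : ℝ := sInf {r | ∃ t : ℂ, r = ‖v 0 - t‖ + ‖v 1 - t‖ + ‖t‖}

lemma SS_nonempty (v : Fin 2 → ℂ) : {r | ∃ t : ℂ, r = ‖v 0 - t‖ + ‖v 1 - t‖ + ‖t‖}.Nonempty :=
  ⟨_, 0, rfl⟩

lemma SS_bdd (v : Fin 2 → ℂ) : BddBelow {r | ∃ t : ℂ, r = ‖v 0 - t‖ + ‖v 1 - t‖ + ‖t‖} := by
  refine ⟨0, ?_⟩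
  rintro r ⟨t, rfl⟩
  positivity

lemma NN_le (v : Fin 2 → ℂ) (t : ℂ) : NN v ≤ ‖v 0 - t‖ + ‖v 1 - t‖ + ‖t‖ :=
  csInf_le (SS_bdd v) ⟨t, rfl⟩

lemma le_NN (v : Fin 2 → ℂ) (b : ℝ) (h : ∀ t : ℂ, b ≤ ‖v 0 - t‖ + ‖v 1 - t‖ + ‖t‖) :
    b ≤ NN v := by
  refine le_csInf (SS_nonempty v) ?_
  rintro r ⟨t, rfl⟩; exact h t

lemma NN_nonneg (v : Fin 2 → ℂ) : 0 ≤ NN v :=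
  le_NN v 0 fun t => by positivity

lemma norm_le_NN (v : Fin 2 → ℂ) (i : Fin 2) : ‖v i‖ ≤ NN v := by
  refine le_NN v _ fun t => ?_
  have h0 : ‖v 0‖ ≤ ‖v 0 - t‖ + ‖t‖ := by
    calc ‖v 0‖ = ‖(v 0 - t) + t‖ := by ring_nf
    _ ≤ _ := norm_add_le _ _
  have h1 : ‖v 1‖ ≤ ‖v 1 - t‖ + ‖t‖ := by
    calc ‖v 1‖ = ‖(v 1 - t) + t‖ := by ring_nf
    _ ≤ _ := norm_add_le _ _
  have := norm_nonneg (v 0 - t); have := norm_nonneg (v 1 - t)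
  fin_cases i <;> simp only [Fin.isValue, Fin.mk_one, Fin.mk_zero] <;> [linarith; linarith]

lemma NN_zero : NN 0 = 0 :=
  le_antisymm (by simpa using NN_le 0 0) (NN_nonneg 0)

lemma NN_eq_zero (v : Fin 2 → ℂ) : NN v = 0 ↔ v = 0 := by
  constructor
  · intro h
    funext i
    have h1 := norm_le_NN v i
    rw [h] at h1
    have h2 := le_antisymm h1 (norm_nonneg _)
    simpa using h2
  · rintro rfl; exact NN_zero

lemma NN_smul_le (c : ℂ) (v : Fin 2 → ℂ) : NN (c • v) ≤ ‖c‖ * NN v := by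
  rcases eq_or_ne c 0 with rfl | hc
  · simp [NN_zero]
  · have hcpos : (0:ℝ) < ‖c‖ := norm_pos_iff.mpr hc
    rw [← div_le_iff₀' hcpos]
    refine le_NN v _ fun t => ?_
    rw [div_le_iff₀' hcpos]
    have := NN_le (c • v) (c * t)
    have e0 : (c • v) 0 - c * t = c * (v 0 - t) := by simp [Pi.smul_apply]; ring
    have e1 : (c • v) 1 - c * t = c * (v 1 - t) := by simp [Pi.smul_apply]; ring
    rw [e0, e1, norm_mul, norm_mul, norm_mul] at this
    linarith [this]

lemma NN_smul (c : ℂ) (v : Fin 2 → ℂ) : NN (c • v) = ‖c‖ * NN v := by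
  rcases eq_or_ne c 0 with rfl | hc
  · simp [NN_zero]
  · refine le_antisymm (NN_smul_le c v) ?_
    have h := NN_smul_le c⁻¹ (c • v)
    rw [smul_smul, inv_mul_cancel₀ hc, one_smul, norm_inv] at h
    have hcpos : (0:ℝ) < ‖c‖ := norm_pos_iff.mpr hc
    have h2 := mul_le_mul_of_nonneg_left h (le_of_lt hcpos)
    rw [← mul_assoc, mul_inv_cancel₀ (ne_of_gt hcpos), one_mul] at h2
    exact h2

lemma NN_add (v w : Fin 2 → ℂ) : NN (v + w) ≤ NN v + NN w := by
  have key : ∀ t₁ t₂ : ℂ, NN (v + w) ≤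
      (‖v 0 - t₁‖ + ‖v 1 - t₁‖ + ‖t₁‖) + (‖w 0 - t₂‖ + ‖w 1 - t₂‖ + ‖t₂‖) := by
    intro t₁ t₂
    refine (NN_le (v + w) (t₁ + t₂)).trans ?_
    have e0 : (v + w) 0 - (t₁ + t₂) = (v 0 - t₁) + (w 0 - t₂) := by simp; ring
    have e1 : (v + w) 1 - (t₁ + t₂) = (v 1 - t₁) + (w 1 - t₂) := by simp; ring
    rw [e0, e1]
    have := norm_add_le (v 0 - t₁) (w 0 - t₂)
    have := norm_add_le (v 1 - t₁) (w 1 - t₂)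
    have := norm_add_le t₁ t₂
    linarith
  have step1 : ∀ t₁ : ℂ, NN (v + w) - (‖v 0 - t₁‖ + ‖v 1 - t₁‖ + ‖t₁‖) ≤ NN w := by
    intro t₁
    refine le_NN w _ fun t₂ => ?_
    linarith [key t₁ t₂]
  have step2 : NN (v + w) - NN w ≤ NN v := by
    refine le_NN v _ fun t₁ => ?_
    linarith [step1 t₁]
  linarith

lemma NN_mul (v w : Fin 2 → ℂ) : NN (v * w) ≤ NN v * NN w := by
  have key : ∀ t₁ t₂ : ℂ, NN (v * w) ≤
      (‖v 0 - t₁‖ + ‖v 1 - t₁‖ + ‖t₁‖) * (‖w 0 - t₂‖ + ‖w 1 - t₂‖ + ‖t₂‖) := by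
    intro t₁ t₂
    refine (NN_le (v * w) (t₁ * t₂)).trans ?_
    have e0 : (v * w) 0 - t₁ * t₂ = (v 0 - t₁) * (w 0 - t₂) + (v 0 - t₁) * t₂ + t₁ * (w 0 - t₂) := by
      simp; ring
    have e1 : (v * w) 1 - t₁ * t₂ = (v 1 - t₁) * (w 1 - t₂) + (v 1 - t₁) * t₂ + t₁ * (w 1 - t₂) := by
      simp; ring
    have h0 : ‖(v * w) 0 - t₁ * t₂‖ ≤ ‖v 0 - t₁‖ * ‖w 0 - t₂‖ + ‖v 0 - t₁‖ * ‖t₂‖ + ‖t₁‖ * ‖w 0 - t₂‖ := by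
      rw [e0]
      refine (norm_add_le _ _).trans ?_
      have := norm_add_le ((v 0 - t₁) * (w 0 - t₂)) ((v 0 - t₁) * t₂)
      simp only [norm_mul] at *
      linarith
    have h1 : ‖(v * w) 1 - t₁ * t₂‖ ≤ ‖v 1 - t₁‖ * ‖w 1 - t₂‖ + ‖v 1 - t₁‖ * ‖t₂‖ + ‖t₁‖ * ‖w 1 - t₂‖ := by
      rw [e1]
      refine (norm_add_le _ _).trans ?_
      have := norm_add_le ((v 1 - t₁) * (w 1 - t₂)) ((v 1 - t₁) * t₂)
      simp only [norm_mul] at *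
      linarith
    have ht : ‖t₁ * t₂‖ = ‖t₁‖ * ‖t₂‖ := norm_mul _ _
    have n1 := norm_nonneg (v 0 - t₁); have n2 := norm_nonneg (v 1 - t₁)
    have n3 := norm_nonneg t₁; have n4 := norm_nonneg (w 0 - t₂)
    have n5 := norm_nonneg (w 1 - t₂); have n6 := norm_nonneg t₂
    nlinarith [mul_nonneg n1 n5, mul_nonneg n2 n4]
  have step1 : ∀ t₁ : ℂ, 0 ≤ ‖v 0 - t₁‖ + ‖v 1 - t₁‖ + ‖t₁‖ := by
    intro t₁; positivity
  have step2 : ∀ t₁ : ℂ, NN (v * w) ≤ (‖v 0 - t₁‖ + ‖v 1 - t₁‖ + ‖t₁‖) * NN w := by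
    intro t₁
    rcases (step1 t₁).eq_or_lt with h | h
    · have := key t₁ 0
      rw [← h] at this ⊢
      simpa using this
    · rw [← div_le_iff₀' h]
      refine le_NN w _ fun t₂ => ?_
      rw [div_le_iff₀' h]
      exact key t₁ t₂
  rcases (NN_nonneg w).eq_or_lt with h | h
  · have := step2 0
    rw [← h] at this ⊢
    simpa using this
  · rw [← div_le_iff₀ h]
    refine le_NN v _ fun t₁ => ?_
    rw [div_le_iff₀ h]
    exact step2 t₁

lemma NN_one : NN 1 = 1 := by
  refine le_antisymm ?_ ?_
  · have := NN_le 1 1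
    simpa using this
  · refine le_NN 1 1 fun t => ?_
    have h : (1:ℝ) = ‖(1 - t) + t‖ := by norm_num
    have h2 : ‖(1:ℂ) - t + t‖ ≤ ‖(1:ℂ) - t‖ + ‖t‖ := norm_add_le _ _
    simp only [Pi.one_apply]
    have := norm_nonneg ((1:ℂ) - t)
    rw [h]
    linarith

lemma NN_exists_min (v : Fin 2 → ℂ) : ∃ t₀ : ℂ, NN v = ‖v 0 - t₀‖ + ‖v 1 - t₀‖ + ‖t₀‖ := by
  set f : ℂ → ℝ := fun t => ‖v 0 - t‖ + ‖v 1 - t‖ + ‖t‖ with hf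
  have hcont : Continuous f := by fun_prop
  set R : ℝ := ‖v 0‖ + ‖v 1‖ with hR
  have hR0 : 0 ≤ R := by positivity
  have hcomp : IsCompact (Metric.closedBall (0:ℂ) R) := isCompact_closedBall _ _
  have hne : (Metric.closedBall (0:ℂ) R).Nonempty := ⟨0, by simpa using hR0⟩
  obtain ⟨t₀, ht₀mem, ht₀⟩ := hcomp.exists_isMinOn hne hcont.continuousOn
  refine ⟨t₀, le_antisymm (NN_le v t₀) ?_⟩
  refine le_NN v _ fun t => ?_
  by_cases ht : ‖t‖ ≤ R
  · exact ht₀ (by simpa [Metric.mem_closedBall, dist_eq_norm] using ht)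
  · push_neg at ht
    have h1 : f t₀ ≤ f 0 := ht₀ (by simpa [Metric.mem_closedBall] using hR0)
    have h2 : f 0 = R := by simp [hf, hR]
    have h3 : R ≤ f t := by
      have : ‖t‖ ≤ f t := by
        have := norm_nonneg (v 0 - t); have := norm_nonneg (v 1 - t)
        simp only [hf]; linarith
      linarith
    show f t₀ ≤ f t
    linarith

lemma K_eq : K = {v | NN v ≤ 1} := by
  ext v
  constructor
  · rintro ⟨w₁, w₂, w₃, hsum, h0, h1⟩
    have := NN_le v w₃
    rw [h0, h1] at this
    simp only [add_sub_cancel_right] at this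
    exact this.trans hsum
  · intro hv
    obtain ⟨t₀, ht₀⟩ := NN_exists_min v
    exact ⟨v 0 - t₀, v 1 - t₀, t₀, by rw [← ht₀]; exact hv, by ring, by ring⟩

/-- The counterexample polynomial `p(z) = 2/5 + (3/5)z - (2/5)z² = (4/5)(z+1/2)(1-z/2)`. -/
noncomputable def pp : Polynomial ℂ := C (2/5) + C (3/5) * X - C (2/5) * X^2

lemma pp_bound (z : ℂ) (hz : ‖z‖ ≤ 1) : ‖Polynomial.eval z pp‖ ≤ 1 := by
  have he : Polynomial.eval z pp = (4/5 : ℂ) * ((z + 1/2) * (1 - z/2)) := by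
    simp [pp]; ring
  rw [he, norm_mul, norm_mul]
  have h45 : ‖(4/5 : ℂ)‖ = 4/5 := by
    norm_num [Complex.norm_def, Complex.normSq_apply]
  rw [h45]
  set x := z.re with hx
  set y := z.im with hy
  have hs : x^2 + y^2 ≤ 1 := by
    have : ‖z‖^2 ≤ 1 := by nlinarith [norm_nonneg z]
    rw [Complex.sq_norm, Complex.normSq_apply] at this
    nlinarith [this]
  have e1 : ‖z + 1/2‖^2 = (x + 1/2)^2 + y^2 := by
    rw [Complex.sq_norm, Complex.normSq_apply]
    simp
    ring
  have e2 : ‖1 - z/2‖^2 = (1 - x/2)^2 + (y/2)^2 := by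
    rw [Complex.sq_norm, Complex.normSq_apply]
    simp [Complex.div_re, Complex.div_im, Complex.normSq_apply]
    ring
  have n1 := norm_nonneg (z + 1/2)
  have n2 := norm_nonneg (1 - z/2)
  have hkey : ((x + 1/2)^2 + y^2) * ((1 - x/2)^2 + (y/2)^2) ≤ 25/16 := by
    nlinarith [mul_nonneg (sub_nonneg.mpr hs) (show (0:ℝ) ≤ 21/16 + (x^2+y^2)/4 - 3*x/4 by nlinarith [sq_nonneg (x-1), sq_nonneg y]), sq_nonneg y, sq_nonneg (x-1)]
  nlinarith [mul_nonneg n1 n2, sq_nonneg (‖z + 1/2‖ * ‖1 - z/2‖ - 5/4), e1, e2]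

lemma supDisk_pp : supDisk pp ≤ 1 := by
  refine Real.sSup_le ?_ zero_le_one
  rintro t ⟨z, hz, rfl⟩
  exact pp_bound z hz

/-- The counterexample point `v = (0, i) = i·e₂ ∈ K`. -/
def vv : Fin 2 → ℂ := ![0, Complex.I]

lemma vv_memK : vv ∈ K := by
  refine ⟨0, Complex.I, 0, ?_, ?_, ?_⟩
  · simp
  · simp [vv]
  · simp [vv]

lemma eval0 : Polynomial.eval (vv 0) pp = 2/5 := by
  simp [vv, pp]

lemma eval1 : Polynomial.eval (vv 1) pp = 4/5 + (3/5) * Complex.I := by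
  simp [vv, pp, Complex.ext_iff]
  norm_num

lemma not_memK : (fun i => Polynomial.eval (vv i) pp) ∉ K := by
  rintro ⟨w₁, w₂, w₃, hsum, h0, h1⟩
  replace h0 : Polynomial.eval (vv 0) pp = w₁ + w₃ := h0
  replace h1 : Polynomial.eval (vv 1) pp = w₂ + w₃ := h1
  rw [eval0] at h0
  rw [eval1] at h1
  set φ₁ : ℂ := ⟨2/25, 47/50⟩ with hφ₁
  set φ₂ : ℂ := ⟨4/5, -(3/5)⟩ with hφ₂
  have hn1 : ‖φ₁‖ ≤ 1 := by
    have : ‖φ₁‖^2 = 89/100 := by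
      rw [Complex.sq_norm, Complex.normSq_apply, hφ₁]
      norm_num
    nlinarith [norm_nonneg φ₁]
  have hn2 : ‖φ₂‖ ≤ 1 := by
    have : ‖φ₂‖^2 = 1 := by
      rw [Complex.sq_norm, Complex.normSq_apply, hφ₂]
      norm_num
    nlinarith [norm_nonneg φ₂]
  have hn3 : ‖φ₁ + φ₂‖ ≤ 1 := by
    have : ‖φ₁ + φ₂‖^2 = 89/100 := by
      rw [Complex.sq_norm, Complex.normSq_apply, hφ₁, hφ₂]
      simp [Complex.add_re, Complex.add_im]
      norm_num
    nlinarith [norm_nonneg (φ₁ + φ₂)]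
  have hval : (φ₁ * (w₁ + w₃) + φ₂ * (w₂ + w₃)).re = 129/125 := by
    rw [← h0, ← h1]
    simp [hφ₁, hφ₂, Complex.mul_re, Complex.add_re, Complex.add_im, Complex.mul_im]
    norm_num
  have hrw : φ₁ * (w₁ + w₃) + φ₂ * (w₂ + w₃) = φ₁ * w₁ + φ₂ * w₂ + (φ₁ + φ₂) * w₃ := by ring
  rw [hrw] at hval
  have hle : (φ₁ * w₁ + φ₂ * w₂ + (φ₁ + φ₂) * w₃).re ≤ ‖w₁‖ + ‖w₂‖ + ‖w₃‖ := by
    have r1 : (φ₁ * w₁).re ≤ ‖φ₁ * w₁‖ := Complex.re_le_norm _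
    have r2 : (φ₂ * w₂).re ≤ ‖φ₂ * w₂‖ := Complex.re_le_norm _
    have r3 : ((φ₁ + φ₂) * w₃).re ≤ ‖(φ₁ + φ₂) * w₃‖ := Complex.re_le_norm _
    have m1 : ‖φ₁ * w₁‖ ≤ ‖w₁‖ := by
      rw [norm_mul]
      nlinarith [norm_nonneg w₁, norm_nonneg φ₁]
    have m2 : ‖φ₂ * w₂‖ ≤ ‖w₂‖ := by
      rw [norm_mul]
      nlinarith [norm_nonneg w₂, norm_nonneg φ₂]
    have m3 : ‖(φ₁ + φ₂) * w₃‖ ≤ ‖w₃‖ := by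
      rw [norm_mul]
      nlinarith [norm_nonneg w₃, norm_nonneg (φ₁ + φ₂)]
    simp only [Complex.add_re]
    linarith
  linarith

/-- `K` is the closed unit ball of a Banach algebra norm on `ℂ²`, but this norm fails
von Neumann's inequality: there are `v ∈ K` and a one-variable polynomial `p` with
`sup{|p(z)| : |z| ≤ 1} ≤ 1` such that `(p(v₁), p(v₂)) ∉ K`.  In particular, there is a
Banach algebra norm on `ℂ²` that does not satisfy von Neumann's inequality. -/
theorem stmt7 :
    (∃ N : (Fin 2 → ℂ) → ℝ, IsBanachAlgebraNorm N ∧ K = {v | N v ≤ 1}) ∧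
    (∃ v ∈ K, ∃ p : Polynomial ℂ, supDisk p ≤ 1 ∧
      (fun i => Polynomial.eval (v i) p) ∉ K) := by
  constructor
  · exact ⟨NN, ⟨NN_eq_zero, NN_smul, NN_add, NN_mul, NN_one⟩, K_eq⟩
  · exact ⟨vv, vv_memK, pp, supDisk_pp, not_memK⟩
end

section
/- Let n ≥ 1, let Q ∈ M_n(ℂ) be invertible, and let w¹, w², w³ ∈ ℂⁿ be such that the commuting diagonalizable matrices T_j := Q·Diag(wʲ)·Q^{-1} (j = 1,2,3) satisfy ‖T_j‖ ≤ 1 in the operator norm. Suppose p is a complex polynomial in three variables with ‖p(T₁,T₂,T₃)‖ > ‖p‖_∞ := sup{|p(z₁,z₂,z₃)| : |zᵢ| ≤ 1}. Define Eᵢ := Q·Eᵢᵢ·Q^{-1} for i = 1,...,n, so that EᵢEⱼ = δᵢⱼEᵢ and E₁+⋯+E_n = I, and set 𝒟 := {v ∈ ℂⁿ : ‖v₁E₁+⋯+v_nE_n‖ ≤ 1}. Then wʲ ∈ 𝒟 for j = 1,2,3, while the vector u ∈ ℂⁿ with uᵢ := p(w¹ᵢ, w²ᵢ, w³ᵢ)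 satisfies ‖u₁E₁+⋯+u_nE_n‖ > ‖p‖_∞. Consequently 𝒟 fails the multivariable von Neumann inequality, i.e., 𝒟 is not a hyperconvex subset of ℂⁿ. -/
/-- A complex polynomial in `m` variables has supremum at most `1` on the closed unit
polydisk of `ℂᵐ`. -/
def PolyContractive {m : ℕ} (p : MvPolynomial (Fin m) ℂ) : Prop :=
  ∀ z : Fin m → ℂ, (∀ j, ‖z j‖ ≤ 1) → ‖MvPolynomial.eval z p‖ ≤ 1

/-- `H ⊆ ℂⁿ` is hyperconvex: closed, bounded, absorbing, balanced, convex, and closed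
under polynomial maps of supremum norm at most `1` on the closed unit polydisk. -/
def Hyperconvex (n : ℕ) (H : Set (Fin n → ℂ)) : Prop :=
  IsClosed H ∧ Bornology.IsBounded H ∧ Absorbent ℂ H ∧ Balanced ℂ H ∧ Convex ℝ H ∧
  ∀ (m : ℕ) (a : Fin m → (Fin n → ℂ)) (p : MvPolynomial (Fin m) ℂ),
    (∀ l, a l ∈ H) → PolyContractive p →
    (fun i => MvPolynomial.eval (fun l => a l i) p) ∈ H

/-- `‖p‖_∞ = sup{|p(z₁,z₂,z₃)| : |zᵢ| ≤ 1}` for `p` a polynomial in three variables. -/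
noncomputable def polySup (p : MvPolynomial (Fin 3) ℂ) : ℝ :=
  sSup {t : ℝ | ∃ z : Fin 3 → ℂ, (∀ j, ‖z j‖ ≤ 1) ∧ t = ‖MvPolynomial.eval z p‖}

lemma diag_eq_sum_std {n : ℕ} (v : Fin n → ℂ) :
    Matrix.diagonal v = ∑ i, v i • Matrix.single i i 1 := by
  ext i j
  rw [Matrix.sum_apply]
  simp only [Matrix.smul_apply, Matrix.single, Matrix.of_apply, smul_eq_mul,
    Matrix.diagonal_apply]
  by_cases h : i = j
  · subst h
    rw [Finset.sum_eq_single i]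
    · simp
    · intro b _ hb; simp [hb]
    · simp
  · rw [if_neg h, Finset.sum_eq_zero]
    intro k _
    by_cases hk : k = i
    · subst hk; simp [h]
    · simp [hk]

lemma conj_mul_conj {n : ℕ} (Q A B : Matrix (Fin n) (Fin n) ℂ) (hQQ : Q⁻¹ * Q = 1) :
    (Q * A * Q⁻¹) * (Q * B * Q⁻¹) = Q * (A * B) * Q⁻¹ := by
  simp only [Matrix.mul_assoc]
  rw [← Matrix.mul_assoc Q⁻¹ Q, hQQ, Matrix.one_mul]

lemma bddAbove_polyset (p : MvPolynomial (Fin 3) ℂ) :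
    BddAbove {t : ℝ | ∃ z : Fin 3 → ℂ, (∀ j, ‖z j‖ ≤ 1) ∧ t = ‖MvPolynomial.eval z p‖} := by
  have hK : IsCompact {z : Fin 3 → ℂ | ∀ j, ‖z j‖ ≤ 1} := by
    have : {z : Fin 3 → ℂ | ∀ j, ‖z j‖ ≤ 1} =
        Set.univ.pi (fun _ => Metric.closedBall (0 : ℂ) 1) := by
      ext z; simp [Metric.mem_closedBall, dist_zero_right]
    rw [this]
    exact isCompact_univ_pi fun _ => isCompact_closedBall _ _
  have hcont : ContinuousOn (fun z : Fin 3 → ℂ => ‖MvPolynomial.eval z p‖)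
      {z : Fin 3 → ℂ | ∀ j, ‖z j‖ ≤ 1} :=
    ((MvPolynomial.continuous_eval p).norm).continuousOn
  have := (hK.image_of_continuousOn hcont).bddAbove
  refine this.mono ?_
  rintro t ⟨z, hz, rfl⟩
  exact ⟨z, hz, rfl⟩

set_option maxHeartbeats 1000000 in
set_option synthInstance.maxHeartbeats 400000 in
/-- Let `Q` be an invertible `n×n` complex matrix, and let `w¹,w²,w³ ∈ ℂⁿ` be such that
the commuting diagonalizable matrices `T_j = Q·Diag(wʲ)·Q⁻¹` are contractions.  Suppose
`p` is a polynomial in three variables with `‖p(T₁,T₂,T₃)‖ > ‖p‖_∞`, where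
`p(T₁,T₂,T₃) = Q·Diag(u)·Q⁻¹` and `uᵢ = p(w¹ᵢ,w²ᵢ,w³ᵢ)`.  With `Eᵢ = Q·Eᵢᵢ·Q⁻¹`, we have
`EᵢEⱼ = δᵢⱼEᵢ`, `E₁+⋯+E_n = I`, each `wʲ` lies in `𝒟 = {v : ‖Σᵢ vᵢEᵢ‖ ≤ 1}`,
`‖Σᵢ uᵢEᵢ‖ > ‖p‖_∞`, and `𝒟` is not hyperconvex. -/
theorem stmt19 (n : ℕ) (hn : 1 ≤ n) (Q : Matrix (Fin n) (Fin n) ℂ)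
    (hQ : IsUnit Q.det) (w : Fin 3 → (Fin n → ℂ))
    (hT : ∀ j : Fin 3,
      ‖Matrix.toEuclideanCLM (𝕜 := ℂ) (Q * Matrix.diagonal (w j) * Q⁻¹)‖ ≤ 1)
    (p : MvPolynomial (Fin 3) ℂ)
    (u : Fin n → ℂ) (hu : u = fun i => MvPolynomial.eval (fun j => w j i) p)
    (hp : polySup p <
      ‖Matrix.toEuclideanCLM (𝕜 := ℂ) (Q * Matrix.diagonal u * Q⁻¹)‖)
    (E : Fin n → Matrix (Fin n) (Fin n) ℂ)
    (hE : E = fun i => Q * Matrix.single i i 1 * Q⁻¹)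
    (𝒟 : Set (Fin n → ℂ))
    (h𝒟 : 𝒟 = {v : Fin n → ℂ | ‖Matrix.toEuclideanCLM (𝕜 := ℂ) (∑ i, v i • E i)‖ ≤ 1}) :
    (∀ i j, E i * E j = if i = j then E i else 0) ∧
    (∑ i, E i = 1) ∧
    (∀ j : Fin 3, w j ∈ 𝒟) ∧
    polySup p < ‖Matrix.toEuclideanCLM (𝕜 := ℂ) (∑ i, u i • E i)‖ ∧
    ¬ Hyperconvex n 𝒟 := by
  have hQQ : Q⁻¹ * Q = 1 := Matrix.nonsing_inv_mul Q hQ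
  -- key: ∑ v i • E i = Q * diagonal v * Q⁻¹
  have key : ∀ v : Fin n → ℂ, (∑ i, v i • E i) = Q * Matrix.diagonal v * Q⁻¹ := by
    intro v
    rw [diag_eq_sum_std, Finset.mul_sum, Finset.sum_mul]
    refine Finset.sum_congr rfl fun i _ => ?_
    rw [hE, Matrix.mul_smul, Matrix.smul_mul]
  have hEE : ∀ i j, E i * E j = if i = j then E i else 0 := by
    intro i j
    rw [hE]
    simp only []
    rw [conj_mul_conj _ _ _ hQQ]
    by_cases h : i = j
    · subst h
      rw [if_pos rfl, Matrix.single_mul_single_same]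
      norm_num
    · rw [if_neg h, Matrix.single_mul_single_of_ne (h := h)]
      simp
  have hsum : (∑ i, E i) = 1 := by
    have h1 := key (fun _ => 1)
    simp only [one_smul] at h1
    rw [h1, Matrix.diagonal_one, Matrix.mul_one, Matrix.mul_nonsing_inv Q hQ]
  have hw𝒟 : ∀ j : Fin 3, w j ∈ 𝒟 := by
    intro j
    rw [h𝒟]
    simp only [Set.mem_setOf_eq, key]
    exact hT j
  have hnorm : polySup p < ‖Matrix.toEuclideanCLM (𝕜 := ℂ) (∑ i, u i • E i)‖ := by
    rw [key]; exact hp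
  refine ⟨hEE, hsum, hw𝒟, hnorm, ?_⟩
  rintro ⟨-, -, -, -, -, hpoly⟩
  have hbdd : BddAbove
      {t : ℝ | ∃ z : Fin 3 → ℂ, (∀ j, ‖z j‖ ≤ 1) ∧ t = ‖MvPolynomial.eval z p‖} :=
    bddAbove_polyset p
  have hle : ∀ z : Fin 3 → ℂ, (∀ j, ‖z j‖ ≤ 1) → ‖MvPolynomial.eval z p‖ ≤ polySup p :=
    fun z hz => le_csSup hbdd ⟨z, hz, rfl⟩
  have hc0 : 0 ≤ polySup p := le_trans (norm_nonneg _) (hle 0 (by simp))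
  set s := ‖Matrix.toEuclideanCLM (𝕜 := ℂ) (∑ i, u i • E i)‖ with hs
  set c := polySup p with hc
  set r := (c + s) / 2 with hr
  have hcr : c < r := by rw [hr]; linarith
  have hrs : r < s := by rw [hr]; linarith
  have hrpos : 0 < r := lt_of_le_of_lt hc0 hcr
  have hnr : ‖((r : ℂ))⁻¹‖ = r⁻¹ := by
    rw [norm_inv, Complex.norm_real, Real.norm_of_nonneg hrpos.le]
  set q := MvPolynomial.C ((r : ℂ)⁻¹) * p with hq
  have hqc : PolyContractive q := by
    intro z hz
    have heq : ‖MvPolynomial.eval z q‖ = r⁻¹ * ‖MvPolynomial.eval z p‖ := by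
      rw [hq, map_mul, norm_mul, MvPolynomial.eval_C, hnr]
    rw [heq]
    calc r⁻¹ * ‖MvPolynomial.eval z p‖ ≤ r⁻¹ * c :=
          mul_le_mul_of_nonneg_left (hle z hz) (by positivity)
      _ ≤ r⁻¹ * r := mul_le_mul_of_nonneg_left hcr.le (by positivity)
      _ = 1 := inv_mul_cancel₀ hrpos.ne'
  have hmem := hpoly 3 w q hw𝒟 hqc
  rw [h𝒟] at hmem
  have heval : (fun i => MvPolynomial.eval (fun l => w l i) q) =
      fun i => (r : ℂ)⁻¹ * u i := by
    funext i
    rw [hq, map_mul, MvPolynomial.eval_C, hu]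
  rw [heval] at hmem
  simp only [Set.mem_setOf_eq] at hmem
  have hsm : (∑ i, ((r : ℂ)⁻¹ * u i) • E i) = (r : ℂ)⁻¹ • ∑ i, u i • E i := by
    rw [Finset.smul_sum]
    exact Finset.sum_congr rfl fun i _ => by rw [smul_smul]
  rw [hsm, map_smul] at hmem
  rw [norm_smul ((r : ℂ)⁻¹) (Matrix.toEuclideanCLM (𝕜 := ℂ) (∑ i, u i • E i)), hnr] at hmem
  have hsr : s ≤ r := by
    have h2 := (inv_mul_le_iff₀ hrpos).mp hmem
    simpa only [mul_one] using h2
  linarith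
end
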